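/- The symmetric-potential is a Hessian: let W : ℝ³ → M₃(ℝ) be smooth and symmetric (W_{ij} = W_{ji}) and satisfy Δ W_{ij} = ∂_i ∂_j (Σ_m W_{mm}) for all i, j at every point. Let φ : ℝ³ → ℝ be smooth with Δφ = Σ_m W_{mm} everywhere. If each component W_{ij} − ∂_i ∂_j φ vanishes at infinity, then W_{ij} = ∂_i ∂_j φ everywhere. -/

import Mathlib

open Filter

/-- Partial derivative in the `i`-th coordinate direction on `ℝ³`. -/
noncomputable def pd (i : Fin 3) (f : EuclideanSpace ℝ (Fin 3) → ℝ) :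
    EuclideanSpace ℝ (Fin 3) → ℝ :=
  fun x => fderiv ℝ f x (EuclideanSpace.single i 1)

/-- The Laplacian `Δf = Σ_i ∂_i ∂_i f` on `ℝ³`. -/
noncomputable def lap (f : EuclideanSpace ℝ (Fin 3) → ℝ) :
    EuclideanSpace ℝ (Fin 3) → ℝ :=
  fun x => ∑ i, pd i (pd i f) x

namespace SPHAux

abbrev E3 := EuclideanSpace ℝ (Fin 3)

lemma pd_contDiff {f : E3 → ℝ} (hf : ContDiff ℝ (⊤ : ℕ∞) f) (i : Fin 3) : ContDiff ℝ (⊤ : ℕ∞) (pd i f) :=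
  (hf.fderiv_right (by simp)).clm_apply contDiff_const

lemma pd_comm {f : E3 → ℝ} (hf : ContDiff ℝ (⊤ : ℕ∞) f) (i j : Fin 3) :
    pd i (pd j f) = pd j (pd i f) := by
  funext x
  have hs : IsSymmSndFDerivAt ℝ f x := hf.contDiffAt.isSymmSndFDerivAt (by rw [minSmoothness_of_isRCLikeNormedField]; exact WithTop.coe_le_coe.2 le_top)
  have key : ∀ a b : Fin 3, pd a (pd b f) x
      = fderiv ℝ (fderiv ℝ f) x (EuclideanSpace.single a 1) (EuclideanSpace.single b 1) := by
    intro a b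
    show fderiv ℝ (fun y => fderiv ℝ f y (EuclideanSpace.single b 1)) x _ = _
    rw [fderiv_clm_apply ((hf.fderiv_right (m := 1) (WithTop.coe_le_coe.2 le_top)).differentiable one_ne_zero).differentiableAt
      (differentiableAt_const _)]
    simp
  rw [key, key, hs.eq]

lemma pd_sub {f g : E3 → ℝ} (hf : Differentiable ℝ f) (hg : Differentiable ℝ g) (i : Fin 3) :
    pd i (fun y => f y - g y) = fun y => pd i f y - pd i g y := by
  funext x
  show fderiv ℝ (fun y => f y - g y) x _ = _
  rw [fderiv_fun_sub (hf x) (hg x)]; rfl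

lemma pd_neg (f : E3 → ℝ) (i : Fin 3) :
    pd i (fun y => -f y) = fun y => -pd i f y := by
  funext x
  show fderiv ℝ (fun y => -f y) x _ = _
  rw [fderiv_fun_neg]; rfl

lemma pd_add_smul {f g : E3 → ℝ} (hf : Differentiable ℝ f) (hg : Differentiable ℝ g)
    (c : ℝ) (i : Fin 3) :
    pd i (fun y => f y + c * g y) = fun y => pd i f y + c * pd i g y := by
  funext x
  show fderiv ℝ (fun y => f y + c * g y) x _ = _
  rw [fderiv_fun_add (hf x) ((hg x).const_mul c), fderiv_const_mul (hg x)]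
  simp [pd]

lemma pd_sum {f : Fin 3 → E3 → ℝ} (hf : ∀ m, Differentiable ℝ (f m)) (i : Fin 3) :
    pd i (fun y => ∑ m, f m y) = fun y => ∑ m, pd i (f m) y := by
  funext x
  show fderiv ℝ (fun y => ∑ m, f m y) x _ = _
  rw [fderiv_fun_sum (fun m _ => (hf m) x)]
  simp [pd]

noncomputable def q : E3 → ℝ := fun y => ∑ m, (y m)^2

lemma q_contDiff : ContDiff ℝ (⊤ : ℕ∞) q := by
  apply ContDiff.sum
  intro m _
  exact ((EuclideanSpace.proj (𝕜 := ℝ) m).contDiff).pow 2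

lemma q_eq_norm (y : E3) : q y = ‖y‖^2 := by
  rw [EuclideanSpace.norm_eq]
  rw [Real.sq_sqrt (by positivity)]
  simp [q, sq_abs]

lemma pd_q (i : Fin 3) : pd i q = fun y => 2 * y i := by
  funext x
  have h : HasFDerivAt q (∑ m, ((x m • EuclideanSpace.proj (𝕜 := ℝ) m)
      + x m • EuclideanSpace.proj (𝕜 := ℝ) m)) x := by
    apply HasFDerivAt.fun_sum
    intro m _
    have hm := (EuclideanSpace.proj (𝕜 := ℝ) m).hasFDerivAt (x := x)
    have := hm.fun_mul hm
    simpa [pow_two] using this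
  show fderiv ℝ q x _ = _
  rw [h.fderiv]
  simp only [ContinuousLinearMap.coe_sum', Finset.sum_apply, ContinuousLinearMap.add_apply,
    ContinuousLinearMap.coe_smul', Pi.smul_apply, PiLp.proj_apply,
    EuclideanSpace.single_apply, smul_eq_mul, mul_ite, mul_one, mul_zero]
  rw [Finset.sum_add_distrib, Finset.sum_ite_eq' Finset.univ i (fun m => x m)]
  simp; ring

lemma pd_pd_q (i : Fin 3) : pd i (pd i q) = fun _ => 2 := by
  rw [pd_q]
  funext x
  have h : HasFDerivAt (fun y : E3 => 2 * y i) ((2:ℝ) • EuclideanSpace.proj (𝕜 := ℝ) i) x := by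
    simpa [smul_eq_mul] using ((EuclideanSpace.proj (𝕜 := ℝ) i).hasFDerivAt (x := x)).const_mul (2:ℝ)
  show fderiv ℝ _ x _ = _
  rw [h.fderiv]
  simp [EuclideanSpace.single_apply]

/-- 1-D second derivative test: at a local max, second derivative is nonpositive. -/
lemma oneDim_sndDeriv_nonpos {g g1 : ℝ → ℝ} {c : ℝ}
    (h1 : ∀ t, HasDerivAt g (g1 t) t) (h2 : HasDerivAt g1 c 0)
    (hmax : IsLocalMax g 0) : c ≤ 0 := by
  by_contra hc
  push_neg at hc
  have hg10 : g1 0 = 0 := hmax.hasDerivAt_eq_zero (h1 0)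
  have hslope : Tendsto (slope g1 0) (nhdsWithin 0 {(0:ℝ)}ᶜ) (nhds c) :=
    hasDerivAt_iff_tendsto_slope.1 h2
  have hev : ∀ᶠ t in nhdsWithin (0:ℝ) (Set.Ioi 0), 0 < g1 t := by
    have h3 : ∀ᶠ t in nhdsWithin (0:ℝ) {(0:ℝ)}ᶜ, 0 < slope g1 0 t :=
      (tendsto_order.1 hslope).1 0 hc
    have h4 : nhdsWithin (0:ℝ) (Set.Ioi 0) ≤ nhdsWithin (0:ℝ) {(0:ℝ)}ᶜ :=
      nhdsWithin_mono _ (fun t ht => ne_of_gt ht)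
    filter_upwards [h4 h3, self_mem_nhdsWithin] with t ht ht'
    have ht'' : (0:ℝ) < t := ht'
    rw [slope_def_field, hg10, sub_zero, sub_zero] at ht
    rcases div_pos_iff.1 ht with ⟨h, _⟩ | ⟨_, h⟩
    · exact h
    · linarith
  obtain ⟨δ, hδ, hδ'⟩ := mem_nhdsGT_iff_exists_Ioo_subset.1 hev
  obtain ⟨δ2, hδ2, hδ2'⟩ := Metric.eventually_nhds_iff.1 hmax
  set t0 := min δ (δ2/2) / 2 with ht0def
  have hδpos : 0 < δ := hδ
  have ht0pos : 0 < t0 := by positivity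
  have hmin1 := min_le_left δ (δ2/2)
  have hmin2 := min_le_right δ (δ2/2)
  have ht0δ : t0 < δ := by rw [ht0def]; linarith
  have ht0δ2 : t0 < δ2 := by rw [ht0def]; linarith
  have hcont : ContinuousOn g (Set.Icc 0 t0) := fun t _ => (h1 t).continuousAt.continuousWithinAt
  obtain ⟨ξ, hξ, hξ'⟩ := exists_hasDerivAt_eq_slope g g1 ht0pos hcont (fun t _ => h1 t)
  have hg1ξ : 0 < g1 ξ := hδ' ⟨hξ.1, lt_trans hξ.2 ht0δ⟩
  have hgt : g 0 < g t0 := by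
    rw [hξ'] at hg1ξ
    have := mul_pos hg1ξ (sub_pos.2 (show (0:ℝ) < t0 from ht0pos))
    rw [div_mul_cancel₀] at this
    · linarith
    · linarith
  have : g t0 ≤ g 0 := by
    apply hδ2'
    simp only [Real.dist_eq, sub_zero]
    rw [abs_of_pos ht0pos]
    exact ht0δ2
  linarith

/-- Second derivative test on `E3`. -/
lemma pd_pd_nonpos_of_isLocalMax {v : E3 → ℝ} (hv : ContDiff ℝ (⊤ : ℕ∞) v) {z : E3}
    (hz : IsLocalMax v z) (i : Fin 3) : pd i (pd i v) z ≤ 0 := by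
  set e : E3 := EuclideanSpace.single i 1 with he
  set L : ℝ → E3 := fun t => z + t • e with hL
  have hLd : ∀ t : ℝ, HasDerivAt L e t := by
    intro t
    simpa [hL] using ((hasDerivAt_id t).smul_const e).const_add z
  have hL0 : L 0 = z := by simp [hL]
  have hvd : Differentiable ℝ v := hv.differentiable (by simp)
  have hpdd : Differentiable ℝ (pd i v) :=
    (((hv.fderiv_right (m := 1) (WithTop.coe_le_coe.2 le_top)).clm_apply contDiff_const).differentiable one_ne_zero)
  have h1 : ∀ t, HasDerivAt (v ∘ L) (pd i v (L t)) t := by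
    intro t
    exact ((hvd (L t)).hasFDerivAt.comp_hasDerivAt t (hLd t))
  have h2 : HasDerivAt (fun t => pd i v (L t)) (pd i (pd i v) z) 0 := by
    have := ((hpdd (L 0)).hasFDerivAt.comp_hasDerivAt 0 (hLd 0))
    rw [hL0] at this; exact this
  have hLcont : Tendsto L (nhds 0) (nhds z) := by
    have : Continuous L := by continuity
    simpa [hL0] using this.tendsto 0
  have hmax : IsLocalMax (v ∘ L) 0 := by
    apply IsMaxFilter.comp_tendsto _ hLcont
    rw [hL0]; exact hz
  exact oneDim_sndDeriv_nonpos h1 h2 hmax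

lemma harmonic_decay_nonpos {u : E3 → ℝ} (hu : ContDiff ℝ (⊤ : ℕ∞) u)
    (hlap : ∀ x, lap u x = 0)
    (hdec : Tendsto u (cocompact E3) (nhds 0)) : ∀ x, u x ≤ 0 := by
  intro x
  have key : ∀ δ : ℝ, 0 < δ → u x ≤ δ := by
    intro δ hδ
    have hmem : {y : E3 | u y < δ} ∈ cocompact E3 := by
      have : Set.Iio δ ∈ nhds (0:ℝ) := Iio_mem_nhds hδ
      exact hdec this
    obtain ⟨K, hK, hKc⟩ := mem_cocompact.1 hmem
    obtain ⟨R, hR⟩ := hK.isBounded.subset_closedBall 0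
    set R' : ℝ := max (R + 1) ‖x‖ with hR'def
    have hRR' : R < R' := lt_of_lt_of_le (by linarith) (le_max_left _ _)
    have hxR' : ‖x‖ ≤ R' := le_max_right _ _
    have hout : ∀ y : E3, R' ≤ ‖y‖ → u y < δ := by
      intro y hy
      apply hKc
      intro hyK
      have := hR hyK
      rw [Metric.mem_closedBall, dist_zero_right] at this
      linarith
    have step : ∀ ε : ℝ, 0 < ε → u x ≤ δ + ε * R'^2 := by
      intro ε hε
      set v : E3 → ℝ := fun y => u y + ε * q y with hv
      have hvc : ContDiff ℝ (⊤ : ℕ∞) v := hu.add (q_contDiff.const_smul ε)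
      have hud : Differentiable ℝ u := hu.differentiable (by simp)
      have hqd : Differentiable ℝ q := q_contDiff.differentiable (by simp)
      have hS : IsCompact (Metric.closedBall (0:E3) R') := isCompact_closedBall _ _
      have hxS : x ∈ Metric.closedBall (0:E3) R' := by
        rw [Metric.mem_closedBall, dist_zero_right]; exact hxR'
      obtain ⟨z, hzS, hzmax⟩ := hS.exists_isMaxOn ⟨x, hxS⟩
        (hvc.continuous.continuousOn)
      rw [Metric.mem_closedBall, dist_zero_right] at hzS
      have hbd : ‖z‖ = R' := by
        by_contra hne
        have hlt : ‖z‖ < R' := lt_of_le_of_ne hzS hne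
        have hloc : IsLocalMax v z := by
          apply hzmax.isLocalMax
          exact Metric.closedBall_mem_nhds_of_mem (by rw [Metric.mem_ball, dist_zero_right]; exact hlt)
        have hsum : ∑ i, pd i (pd i v) z ≤ 0 :=
          Finset.sum_nonpos (fun i _ => pd_pd_nonpos_of_isLocalMax hvc hloc i)
        have hlapv : ∑ i, pd i (pd i v) z = 6 * ε := by
          have e1 : ∀ i : Fin 3, pd i (pd i v) z = pd i (pd i u) z + ε * 2 := by
            intro i
            have h1 : pd i v = fun y => pd i u y + ε * pd i q y := pd_add_smul hud hqd ε i
            have h2 : pd i (pd i v) = fun y => pd i (pd i u) y + ε * pd i (pd i q) y := by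
              rw [h1]
              exact pd_add_smul ((pd_contDiff hu i).differentiable (by simp))
                ((pd_contDiff q_contDiff i).differentiable (by simp)) ε i
            rw [h2]
            simp [pd_pd_q i]
          rw [Finset.sum_congr rfl (fun i _ => e1 i), Finset.sum_add_distrib]
          have := hlap z
          unfold lap at this
          rw [this]
          simp
          ring
        rw [hlapv] at hsum
        nlinarith
      have h1 : v x ≤ v z := hzmax hxS
      have h2 : u z < δ := hout z (le_of_eq hbd.symm)
      have h3 : q z = R'^2 := by rw [q_eq_norm, hbd]
      have h4 : 0 ≤ q x := by rw [q_eq_norm]; positivity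
      have : u x + ε * q x ≤ u z + ε * q z := h1
      rw [h3] at this
      nlinarith
    by_contra hlt
    push_neg at hlt
    have hC : (0:ℝ) < R'^2 + 1 := by positivity
    have := step ((u x - δ) / (R'^2 + 1)) (by apply div_pos <;> linarith)
    rw [div_mul_eq_mul_div] at this
    have h5 : (u x - δ) * R'^2 / (R'^2 + 1) < u x - δ := by
      rw [div_lt_iff₀ hC]
      nlinarith
    linarith
  by_contra h
  push_neg at h
  have := key (u x / 2) (by linarith)
  linarith

lemma harmonic_decay_zero {u : E3 → ℝ} (hu : ContDiff ℝ (⊤ : ℕ∞) u)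
    (hlap : ∀ x, lap u x = 0)
    (hdec : Tendsto u (cocompact E3) (nhds 0)) : ∀ x, u x = 0 := by
  intro x
  have h1 := harmonic_decay_nonpos hu hlap hdec x
  have hlapneg : ∀ y, lap (fun y' => -u y') y = 0 := by
    intro y
    show ∑ i, pd i (pd i (fun y' => -u y')) y = 0
    have e : ∀ i : Fin 3, pd i (pd i (fun y' => -u y')) y = -(pd i (pd i u) y) := by
      intro i
      rw [pd_neg u i]
      exact congrFun (pd_neg (pd i u) i) y
    rw [Finset.sum_congr rfl (fun i _ => e i), Finset.sum_neg_distrib]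
    have := hlap y
    unfold lap at this
    rw [this, neg_zero]
  have h2 := harmonic_decay_nonpos hu.neg hlapneg (by simpa using hdec.neg) x
  simp only [neg_nonpos] at h2
  linarith

end SPHAux

open SPHAux in
/-- The symmetric potential is a Hessian. -/
theorem symmetric_potential_is_hessian
    (W : EuclideanSpace ℝ (Fin 3) → Matrix (Fin 3) (Fin 3) ℝ)
    (hW : ∀ i j, ContDiff ℝ (⊤ : ℕ∞) (fun x => W x i j))
    (hsymm : ∀ x i j, W x i j = W x j i)
    (heq : ∀ x i j, lap (fun y => W y i j) x = pd i (pd j (fun y => ∑ m, W y m m)) x)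
    (φ : EuclideanSpace ℝ (Fin 3) → ℝ)
    (hφ : ContDiff ℝ (⊤ : ℕ∞) φ)
    (hlapφ : ∀ x, lap φ x = ∑ m, W x m m)
    (hdecay : ∀ i j, Tendsto (fun x => W x i j - pd i (pd j φ) x)
      (cocompact (EuclideanSpace ℝ (Fin 3))) (nhds 0)) :
    ∀ x i j, W x i j = pd i (pd j φ) x := by
  intro x i j
  set u : E3 → ℝ := fun y => W y i j - pd i (pd j φ) y with hudef
  have hφij : ContDiff ℝ (⊤ : ℕ∞) (pd i (pd j φ)) := pd_contDiff (pd_contDiff hφ j) i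
  have huc : ContDiff ℝ (⊤ : ℕ∞) u := (hW i j).sub hφij
  have hlapu : ∀ y, lap u y = 0 := by
    intro y
    have hWd : Differentiable ℝ (fun y0 => W y0 i j) := (hW i j).differentiable (by simp)
    have hφijd : Differentiable ℝ (pd i (pd j φ)) := hφij.differentiable (by simp)
    have hcomm : ∀ m : Fin 3, pd m (pd m (pd i (pd j φ))) = pd i (pd j (pd m (pd m φ))) := by
      intro m
      calc pd m (pd m (pd i (pd j φ)))
          = pd m (pd i (pd m (pd j φ))) := by rw [pd_comm (pd_contDiff hφ j) m i]
        _ = pd i (pd m (pd m (pd j φ))) := pd_comm (pd_contDiff (pd_contDiff hφ j) m) m i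
        _ = pd i (pd m (pd j (pd m φ))) := by rw [pd_comm hφ m j]
        _ = pd i (pd j (pd m (pd m φ))) := by rw [pd_comm (pd_contDiff hφ m) m j]
    have e1 : ∀ m : Fin 3, pd m (pd m u) y = pd m (pd m (fun y0 => W y0 i j)) y
        - pd i (pd j (pd m (pd m φ))) y := by
      intro m
      have h1 : pd m u = fun y' => pd m (fun y0 => W y0 i j) y' - pd m (pd i (pd j φ)) y' :=
        pd_sub hWd hφijd m
      have h2 : pd m (pd m u) = fun y' => pd m (pd m (fun y0 => W y0 i j)) y'
          - pd m (pd m (pd i (pd j φ))) y' := by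
        rw [h1]
        exact pd_sub ((pd_contDiff (hW i j) m).differentiable (by simp))
          ((pd_contDiff hφij m).differentiable (by simp)) m
      rw [congrFun h2 y, congrFun (hcomm m) y]
    have e2 : ∑ m : Fin 3, pd i (pd j (pd m (pd m φ))) y = lap (fun y0 => W y0 i j) y := by
      have hd1 : ∀ m : Fin 3, Differentiable ℝ (pd j (pd m (pd m φ))) := fun m =>
        (pd_contDiff (pd_contDiff (pd_contDiff hφ m) m) j).differentiable (by simp)
      have hA : (fun y' => ∑ m : Fin 3, pd j (pd m (pd m φ)) y')
          = pd j (fun y' => ∑ m : Fin 3, pd m (pd m φ) y') := by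
        rw [pd_sum (fun m => (pd_contDiff (pd_contDiff hφ m) m).differentiable (by simp)) j]
      have hB : (fun y' => ∑ m : Fin 3, pd m (pd m φ) y') = fun y' => ∑ m, W y' m m := by
        funext y'
        exact hlapφ y'
      calc ∑ m : Fin 3, pd i (pd j (pd m (pd m φ))) y
          = pd i (fun y' => ∑ m : Fin 3, pd j (pd m (pd m φ)) y') y := by
            rw [pd_sum (fun m => hd1 m) i]
        _ = pd i (pd j (fun y' => ∑ m, W y' m m)) y := by rw [hA, hB]
        _ = lap (fun y0 => W y0 i j) y := (heq y i j).symm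
    show ∑ m : Fin 3, pd m (pd m u) y = 0
    rw [Finset.sum_congr rfl (fun m _ => e1 m), Finset.sum_sub_distrib, e2]
    simp [lap]
  have := harmonic_decay_zero huc hlapu (hdecay i j) x
  have : W x i j - pd i (pd j φ) x = 0 := this
  linarith
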